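/- arXiv:2505.06765 — 2 statements merged into one kernel-verified Lean document; each statement's English description precedes it below -/
import Mathlib

section
/- Let q : ℝⁿ × ℝⁿ → ℝ be a symmetric kernel all of whose Gram matrices are positive semidefinite, let ρ > 0, and for a tuple X = (x₁,…,x_p) of points in ℝⁿ write P(X) for the p×p Gram matrix with entries P(X)_{ij} = q(x_i, x_j), Q(x,X) = (q(x,x₁),…,q(x,x_p))ᵀ ∈ ℝ^p, and Ω(X) = P(X) + ρ²I_p. Let X = (x₁,…,x_p), Y ∈ ℝ^{p×n}, l ∈ {1,…,p}, x ∈ ℝⁿ, and y ∈ ℝⁿ; let X̲ and Y̲ be X and Y with entry/row l deleted, and let X⁺ and Y⁺ be X̲ and Y̲ with x and yᵀ appended as the last entry/row. Set Σ = Ω(X)⁻¹, ϑ = Ω(X)⁻¹Y, Σ̲ = Σ_{¬l,¬l} − (1/Σ_{ll}) Σ_{¬l,l} Σ_{¬l,l}ᵀ, ζ = Σ̲ Q(x, X̲), τ = q(x,x) − Q(x,X̲)ᵀζ + ρ², ϑ̲ = ϑ_{¬l} − (1/Σ_{ll}) Σ_{¬l,l} ϑ_{[l]} (where ϑ_{[l]}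 is the l-th row of ϑ), and μ̲ = ϑ̲ᵀ Q(x, X̲) ∈ ℝⁿ. Then the p×n matrix whose first p−1 rows are ϑ̲ + (1/τ) ζ (μ̲ᵀ − yᵀ) and whose last row is (1/τ)(yᵀ − μ̲ᵀ) equals Ω(X⁺)⁻¹ Y⁺. -/
/-!
Removing the pair `l`: since `S = Ω⁻¹`, eliminating the `l`-th unknown from `Ω ϑ = Y` with
pivot `S l l > 0` solves the system of `Ω` with row and column `l` deleted; applied to the
columns of `S` and to `ϑ` this gives `Σ̲ = Ω(X̲)⁻¹` and `ϑ̲ = Ω(X̲)⁻¹ Y̲`. Appending `(x, y)`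
borders `Ω(X̲)` by `b = Q(x, X̲)` and `c = q(x, x) + ρ²`, and block elimination solves the
bordered system through the Schur complement `τ = c - bᵀ Σ̲ b`, which is nonzero because the
invertible bordered matrix maps `(-ζ, 1)` to `τ` times the last unit vector.
-/

open Matrix

namespace Matrix

variable {K : Type*} [Field K] {p : ℕ} {κ : Type*}

def downdate (S : Matrix (Fin (p + 1)) (Fin (p + 1)) K) (l : Fin (p + 1))
    (ϑ : Matrix (Fin (p + 1)) κ K) : Matrix (Fin p) κ K :=
  of fun i j => ϑ (l.succAbove i) j - (S l l)⁻¹ * S (l.succAbove i) l * ϑ l j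

theorem submatrix_succAbove_mul_downdate {Ω S : Matrix (Fin (p + 1)) (Fin (p + 1)) K}
    {ϑ Y : Matrix (Fin (p + 1)) κ K} {l : Fin (p + 1)} (hΩS : Ω * S = 1) (hΩϑ : Ω * ϑ = Y)
    (hl : S l l ≠ 0) :
    Ω.submatrix l.succAbove l.succAbove * downdate S l ϑ = Y.submatrix l.succAbove id := by
  ext i j
  have hY := congr_fun₂ hΩϑ (l.succAbove i) j
  have hS := congr_fun₂ hΩS (l.succAbove i) l
  rw [mul_apply, Fin.sum_univ_succAbove _ l] at hY hS
  rw [one_apply_ne (Fin.succAbove_ne l i)] at hS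
  set σ := l.succAbove
  have hsplit : (Ω.submatrix σ σ * downdate S l ϑ) i j =
      ∑ k, Ω (σ i) (σ k) * ϑ (σ k) j - (S l l)⁻¹ * ϑ l j * ∑ k, Ω (σ i) (σ k) * S (σ k) l := by
    simp only [mul_apply, submatrix_apply, downdate, of_apply, Finset.mul_sum,
      ← Finset.sum_sub_distrib]
    exact Finset.sum_congr rfl fun k _ => by ring
  rw [hsplit, submatrix_apply, id]
  linear_combination hY - (S l l)⁻¹ * ϑ l j * hS +
    Ω (σ i) l * ϑ l j * inv_mul_cancel₀ hl

theorem submatrix_succAbove_mul_sub_vecMulVec {Ω S : Matrix (Fin (p + 1)) (Fin (p + 1)) K}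
    {l : Fin (p + 1)} (hΩS : Ω * S = 1) (hS : S.IsSymm) (hl : S l l ≠ 0) :
    Ω.submatrix l.succAbove l.succAbove * (S.submatrix l.succAbove l.succAbove -
      (S l l)⁻¹ • vecMulVec (fun i => S (l.succAbove i) l) (fun j => S (l.succAbove j) l)) =
      1 := by
  have hdown : S.submatrix l.succAbove l.succAbove -
      (S l l)⁻¹ • vecMulVec (fun i => S (l.succAbove i) l) (fun j => S (l.succAbove j) l) =
      downdate S l (S.submatrix id l.succAbove) := by
    ext i j
    simp only [sub_apply, submatrix_apply, smul_apply, vecMulVec_apply, smul_eq_mul, downdate,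
      id_eq, of_apply, hS.apply l (l.succAbove j)]
    ring
  rw [hdown, submatrix_succAbove_mul_downdate hΩS
    (Y := (1 : Matrix _ _ K).submatrix id l.succAbove) (by rw [← hΩS]; rfl) hl]
  exact submatrix_one _ Fin.succAbove_right_injective

/-- The symmetric bordering `[[A, b], [bᵀ, c]]`, the new index being the last one. -/
def bordered (A : Matrix (Fin p) (Fin p) K) (b : Fin p → K) (c : K) :
    Matrix (Fin (p + 1)) (Fin (p + 1)) K :=
  of fun i j => Fin.lastCases (Fin.lastCases c b j) (fun i' => Fin.lastCases (b i') (A i') j) i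

theorem bordered_mulVec_snoc {A : Matrix (Fin p) (Fin p) K} {b ζ : Fin p → K} (c : K)
    (hζ : A *ᵥ ζ = b) :
    bordered A b c *ᵥ Fin.snoc (-ζ) 1 = Pi.single (Fin.last p) (c - b ⬝ᵥ ζ) := by
  ext i
  induction i using Fin.lastCases with
  | last =>
    simp only [mulVec, dotProduct, bordered, of_apply, Fin.lastCases_last, Fin.sum_univ_castSucc,
      Fin.lastCases_castSucc, Fin.snoc_castSucc, Pi.neg_apply, mul_neg, Finset.sum_neg_distrib,
      Fin.snoc_last, mul_one, Pi.single_eq_same]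
    ring
  | cast i =>
    subst hζ
    simp [bordered, mulVec, dotProduct, Fin.sum_univ_castSucc]

theorem sub_dotProduct_ne_zero_of_isUnit_bordered {A : Matrix (Fin p) (Fin p) K}
    {b ζ : Fin p → K} {c : K} (h : IsUnit (bordered A b c)) (hζ : A *ᵥ ζ = b) :
    c - b ⬝ᵥ ζ ≠ 0 := by
  intro hc
  have := mulVec_injective_iff_isUnit.mpr h
    (show bordered A b c *ᵥ Fin.snoc (-ζ) 1 = bordered A b c *ᵥ 0 by
      rw [bordered_mulVec_snoc c hζ, hc, Pi.single_zero, mulVec_zero])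
  simpa using congr_fun this (Fin.last p)

theorem bordered_mul {A : Matrix (Fin p) (Fin p) K} {b ζ : Fin p → K} {c τ : K}
    {ϑ Y : Matrix (Fin p) κ K} {μ : κ → K} (y : κ → K) (hϑ : A * ϑ = Y) (hζ : A *ᵥ ζ = b)
    (hτ : τ = c - b ⬝ᵥ ζ) (hτ0 : τ ≠ 0) (hμ : μ = vecMul b ϑ) :
    bordered A b c * (of fun i j => Fin.lastCases ((1 / τ) * (y j - μ j))
        (fun i' => ϑ i' j + (1 / τ) * ζ i' * (μ j - y j)) i : Matrix (Fin (p + 1)) κ K) =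
      of fun (i : Fin (p + 1)) (j : κ) => Fin.lastCases (y j) (fun i' => Y i' j) i := by
  ext i j
  rw [mul_apply, Fin.sum_univ_castSucc]
  induction i using Fin.lastCases with
  | last =>
    have hrow : ∑ k, b k * (ϑ k j + 1 / τ * ζ k * (μ j - y j)) =
        μ j + 1 / τ * (μ j - y j) * (b ⬝ᵥ ζ) := by
      simp only [hμ, vecMul, dotProduct, mul_add, Finset.sum_add_distrib, Finset.mul_sum]
      exact congrArg _ (Finset.sum_congr rfl fun k _ => by ring)
    simp only [bordered, of_apply, Fin.lastCases_last, Fin.lastCases_castSucc, hrow]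
    linear_combination (y j - μ j) * inv_mul_cancel₀ hτ0 + 1 / τ * (μ j - y j) * hτ
  | cast i =>
    have hrow : ∑ k, A i k * (ϑ k j + 1 / τ * ζ k * (μ j - y j)) =
        Y i j + 1 / τ * (μ j - y j) * b i := by
      simp only [← hϑ, ← hζ, mul_apply, mulVec, dotProduct, mul_add, Finset.sum_add_distrib,
        Finset.mul_sum]
      exact congrArg _ (Finset.sum_congr rfl fun k _ => by ring)
    simp only [bordered, of_apply, Fin.lastCases_last, Fin.lastCases_castSucc, hrow]
    ring

section Gram

variable {E : Type*} (q : E → E → K)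

theorem gram_add_smul_one_submatrix {ι ι' : Type*} [DecidableEq ι] [DecidableEq ι']
    (z : ι → E) {e : ι' → ι} (he : Function.Injective e) (r : K) :
    ((of fun i j => q (z i) (z j)) + r • 1).submatrix e e =
      (of fun i j => q (z (e i)) (z (e j))) + r • 1 := by
  ext i j
  simp [one_apply, he.eq_iff]

theorem gram_snoc_add_smul_one (hq : ∀ u v, q u v = q v u) (z : Fin p → E) (x : E) (r : K) :
    (of fun i j => q (Fin.snoc (α := fun _ => E) z x i) (Fin.snoc (α := fun _ => E) z x j)) +
      r • 1 =
      bordered ((of fun i j => q (z i) (z j)) + r • 1) (fun i => q x (z i)) (q x x + r) := by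
  ext i j
  induction i using Fin.lastCases <;> induction j using Fin.lastCases <;>
    simp [bordered, one_apply, hq x, (Fin.castSucc_ne_last _).symm]

end Gram

end Matrix

theorem stmt_6_general (n p : ℕ)
    (q : (Fin n → ℝ) → (Fin n → ℝ) → ℝ)
    (hqsymm : ∀ u v, q u v = q v u)
    (hqpsd : ∀ (m : ℕ) (z : Fin m → (Fin n → ℝ)),
      (Matrix.of fun i j => q (z i) (z j)).PosSemidef)
    (ρ : ℝ) (hρ : 0 < ρ)
    (X : Fin (p + 1) → (Fin n → ℝ)) (Y : Matrix (Fin (p + 1)) (Fin n) ℝ)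
    (l : Fin (p + 1)) (x : Fin n → ℝ) (y : Fin n → ℝ)
    (Xdel : Fin p → (Fin n → ℝ)) (hXdel : Xdel = X ∘ l.succAbove)
    (Xplus : Fin (p + 1) → (Fin n → ℝ)) (hXplus : Xplus = Fin.snoc Xdel x)
    (Yplus : Matrix (Fin (p + 1)) (Fin n) ℝ)
    (hYplus : Yplus = Matrix.of fun i j =>
      Fin.lastCases (y j) (fun i' => Y (l.succAbove i') j) i)
    (S : Matrix (Fin (p + 1)) (Fin (p + 1)) ℝ)
    (hS : S = ((Matrix.of fun i j => q (X i) (X j)) + ρ ^ 2 • 1)⁻¹)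
    (ϑ : Matrix (Fin (p + 1)) (Fin n) ℝ)
    (hϑ : ϑ = ((Matrix.of fun i j => q (X i) (X j)) + ρ ^ 2 • 1)⁻¹ * Y)
    (Sdel : Matrix (Fin p) (Fin p) ℝ)
    (hSdel : Sdel = S.submatrix l.succAbove l.succAbove -
      (S l l)⁻¹ • vecMulVec (fun i => S (l.succAbove i) l)
        (fun j => S (l.succAbove j) l))
    (ζ : Fin p → ℝ) (hζ : ζ = Sdel.mulVec (fun i => q x (Xdel i)))
    (τ : ℝ) (hτ : τ = q x x - (fun i => q x (Xdel i)) ⬝ᵥ ζ + ρ ^ 2)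
    (ϑdel : Matrix (Fin p) (Fin n) ℝ)
    (hϑdel : ϑdel = Matrix.of fun i j =>
      ϑ (l.succAbove i) j - (S l l)⁻¹ * S (l.succAbove i) l * ϑ l j)
    (μdel : Fin n → ℝ)
    (hμdel : μdel = Matrix.vecMul (fun i => q x (Xdel i)) ϑdel) :
    (Matrix.of fun i j =>
      Fin.lastCases
        ((1 / τ) * (y j - μdel j))
        (fun i' => ϑdel i' j + (1 / τ) * ζ i' * (μdel j - y j)) i) =
      ((Matrix.of fun i j => q (Xplus i) (Xplus j)) + ρ ^ 2 • 1)⁻¹ * Yplus := by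
  subst hXdel hXplus
  have hPD (m : ℕ) (z : Fin m → (Fin n → ℝ)) :
      ((Matrix.of fun i j => q (z i) (z j)) + ρ ^ 2 • 1).PosDef :=
    PosDef.posSemidef_add (hqpsd m z) (PosDef.one.smul (by positivity))
  set Ω : Matrix (Fin (p + 1)) (Fin (p + 1)) ℝ :=
    (Matrix.of fun i j => q (X i) (X j)) + ρ ^ 2 • 1
  set Xdel := X ∘ l.succAbove
  set Ωdel : Matrix (Fin p) (Fin p) ℝ :=
    (Matrix.of fun i j => q (Xdel i) (Xdel j)) + ρ ^ 2 • 1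
  set b : Fin p → ℝ := fun i => q x (Xdel i)
  have hΩdet : IsUnit Ω.det := Ω.isUnit_iff_isUnit_det.mp (hPD _ X).isUnit
  have hΩS : Ω * S = 1 := hS ▸ mul_nonsing_inv Ω hΩdet
  have hSpos : S.PosDef := hS ▸ (hPD _ X).inv
  have hSl : S l l ≠ 0 := hSpos.diag_pos.ne'
  have hΩdel : Ω.submatrix l.succAbove l.succAbove = Ωdel :=
    gram_add_smul_one_submatrix q X Fin.succAbove_right_injective _
  have hΩdelζ : Ωdel *ᵥ ζ = b := by
    rw [hζ, mulVec_mulVec, hSdel, ← hΩdel, submatrix_succAbove_mul_sub_vecMulVec hΩS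
      (isHermitian_iff_isSymm.mp hSpos.isHermitian) hSl, one_mulVec]
  have hΩdelϑdel : Ωdel * ϑdel = Y.submatrix l.succAbove id := hΩdel ▸ hϑdel ▸
    submatrix_succAbove_mul_downdate hΩS (hϑ ▸ mul_nonsing_inv_cancel_left Ω Y hΩdet) hSl
  have hΩplus := gram_snoc_add_smul_one q hqsymm Xdel x (ρ ^ 2)
  have hunit : IsUnit (bordered Ωdel b (q x x + ρ ^ 2)) :=
    hΩplus ▸ (hPD _ (Fin.snoc Xdel x)).isUnit
  have hτ' : τ = q x x + ρ ^ 2 - b ⬝ᵥ ζ := by rw [hτ]; ring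
  have hτ0 : τ ≠ 0 := hτ' ▸ sub_dotProduct_ne_zero_of_isUnit_bordered hunit hΩdelζ
  rw [hΩplus, hYplus]
  refine (nonsing_inv_mul_cancel_left _ _ ((isUnit_iff_isUnit_det _).mp hunit)).symm.trans
    (congrArg _ ?_)
  exact bordered_mul y hΩdelϑdel hΩdelζ hτ' hτ0 hμdel

/-- Single-step correctness of the recursive update of the GP regression
weights (the ϑ-part of Proposition 2): removing the data pair `l` and appending
the new pair `(x, y)`, the product `Ω(X⁺)⁻¹Y⁺` is obtained from `Σ = Ω(X)⁻¹`
and `ϑ = Ω(X)⁻¹Y` without matrix inversion. -/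
theorem stmt_6 (n p : ℕ) (hp : 1 ≤ p)
    (q : (Fin n → ℝ) → (Fin n → ℝ) → ℝ)
    (hqsymm : ∀ u v, q u v = q v u)
    (hqpsd : ∀ (m : ℕ) (z : Fin m → (Fin n → ℝ)),
      (Matrix.of fun i j => q (z i) (z j)).PosSemidef)
    (ρ : ℝ) (hρ : 0 < ρ)
    (X : Fin (p + 1) → (Fin n → ℝ)) (Y : Matrix (Fin (p + 1)) (Fin n) ℝ)
    (l : Fin (p + 1)) (x : Fin n → ℝ) (y : Fin n → ℝ)
    (Xdel : Fin p → (Fin n → ℝ)) (hXdel : Xdel = X ∘ l.succAbove)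
    (Xplus : Fin (p + 1) → (Fin n → ℝ)) (hXplus : Xplus = Fin.snoc Xdel x)
    (Yplus : Matrix (Fin (p + 1)) (Fin n) ℝ)
    (hYplus : Yplus = Matrix.of fun i j =>
      Fin.lastCases (y j) (fun i' => Y (l.succAbove i') j) i)
    (S : Matrix (Fin (p + 1)) (Fin (p + 1)) ℝ)
    (hS : S = ((Matrix.of fun i j => q (X i) (X j)) + ρ ^ 2 • 1)⁻¹)
    (ϑ : Matrix (Fin (p + 1)) (Fin n) ℝ)
    (hϑ : ϑ = ((Matrix.of fun i j => q (X i) (X j)) + ρ ^ 2 • 1)⁻¹ * Y)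
    (Sdel : Matrix (Fin p) (Fin p) ℝ)
    (hSdel : Sdel = S.submatrix l.succAbove l.succAbove -
      (S l l)⁻¹ • vecMulVec (fun i => S (l.succAbove i) l)
        (fun j => S (l.succAbove j) l))
    (ζ : Fin p → ℝ) (hζ : ζ = Sdel.mulVec (fun i => q x (Xdel i)))
    (τ : ℝ) (hτ : τ = q x x - (fun i => q x (Xdel i)) ⬝ᵥ ζ + ρ ^ 2)
    (ϑdel : Matrix (Fin p) (Fin n) ℝ)
    (hϑdel : ϑdel = Matrix.of fun i j =>
      ϑ (l.succAbove i) j - (S l l)⁻¹ * S (l.succAbove i) l * ϑ l j)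
    (μdel : Fin n → ℝ)
    (hμdel : μdel = Matrix.vecMul (fun i => q x (Xdel i)) ϑdel) :
    (Matrix.of fun i j =>
      Fin.lastCases
        ((1 / τ) * (y j - μdel j))
        (fun i' => ϑdel i' j + (1 / τ) * ζ i' * (μdel j - y j)) i) =
      ((Matrix.of fun i j => q (Xplus i) (Xplus j)) + ρ ^ 2 • 1)⁻¹ * Yplus :=
  stmt_6_general n p q hqsymm hqpsd ρ hρ X Y l x y Xdel hXdel Xplus hXplus Yplus hYplus S hS ϑ hϑ
    Sdel hSdel ζ hζ τ hτ ϑdel hϑdel μdel hμdel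
end

section
/- Let m ≥ 1, let H ∈ ℝ^{m×m} be symmetric positive definite, let β > 0, u_d ∈ ℝᵐ, a ∈ ℝᵐ, and s, c₀ ∈ ℝ with (a, s) ≠ (0, 0). Define ε = aᵀH⁻¹a + s²/β, ω = c₀ + aᵀu_d, λ_* = −ω/ε if ω < 0 and λ_* = 0 if ω ≥ 0, u_* = u_d + λ_* H⁻¹a, and δ_* = λ_* s/β. Then the constraint value at the optimum satisfies c₀ + aᵀu_* + s δ_* = max(ω, 0) ≥ 0, and complementary slackness holds: λ_* · (c₀ + aᵀu_* + s δ_*) = 0. -/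
open Matrix

/-! The filtered pair `(u⋆, δ⋆)` moves along the direction `(H⁻¹a, s/β)`, along which the
constraint grows at rate `ε = aᵀH⁻¹a + s²/β`; so its value is `ω + λ⋆ ε`. This rate is positive
because `H⁻¹` is positive definite, `β > 0` and `(a, s) ≠ 0`, and the choice of `λ⋆` makes
`ω + λ⋆ ε` equal to `max(ω, 0)`, which vanishes exactly when `λ⋆` can be nonzero. -/

theorem Matrix.PosDef.dotProduct_inv_mulVec_add_sq_div_pos {n : Type*} [Fintype n]
    [DecidableEq n] {H : Matrix n n ℝ} (hH : H.PosDef) {β : ℝ} (hβ : 0 < β)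
    {a : n → ℝ} {s : ℝ} (hns : ¬(a = 0 ∧ s = 0)) :
    0 < a ⬝ᵥ H⁻¹ *ᵥ a + s ^ 2 / β := by
  have hquad : 0 ≤ a ⬝ᵥ H⁻¹ *ᵥ a := by
    simpa using hH.inv.posSemidef.dotProduct_mulVec_nonneg a
  rcases not_and_or.mp hns with ha | hs
  · have : 0 < a ⬝ᵥ H⁻¹ *ᵥ a := by simpa using hH.inv.dotProduct_mulVec_pos ha
    positivity
  · have : 0 < s ^ 2 / β := by positivity
    linarith

theorem constraint_along_filter_direction {n : Type*} [Fintype n]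
    (M : Matrix n n ℝ) (β c₀ s lam : ℝ) (a ud : n → ℝ) :
    c₀ + a ⬝ᵥ (ud + lam • M *ᵥ a) + s * (lam * s / β) =
      c₀ + a ⬝ᵥ ud + lam * (a ⬝ᵥ M *ᵥ a + s ^ 2 / β) := by
  rw [dotProduct_add, dotProduct_smul, smul_eq_mul]
  ring

theorem add_ite_neg_div_mul_eq_max {ω ε : ℝ} (hε : ε ≠ 0) :
    ω + (if ω < 0 then -ω / ε else 0) * ε = max ω 0 := by
  split_ifs with hω
  · rw [div_mul_cancel₀ _ hε, max_eq_right hω.le]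
    ring
  · rw [zero_mul, add_zero, max_eq_left (not_lt.mp hω)]

theorem ite_neg_div_mul_max_eq_zero (ω ε : ℝ) :
    (if ω < 0 then -ω / ε else 0) * max ω 0 = 0 := by
  split_ifs with hω
  · rw [max_eq_right hω.le, mul_zero]
  · rw [zero_mul]

theorem stmt_11_general (m : ℕ)
    (H : Matrix (Fin m) (Fin m) ℝ) (hH : H.PosDef)
    (β : ℝ) (hβ : 0 < β)
    (ud a : Fin m → ℝ) (s c₀ : ℝ)
    (hns : ¬(a = 0 ∧ s = 0))
    (ε ω lam : ℝ) (ustar : Fin m → ℝ) (δstar : ℝ)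
    (hε : ε = a ⬝ᵥ H⁻¹.mulVec a + s ^ 2 / β)
    (hω : ω = c₀ + a ⬝ᵥ ud)
    (hlam : lam = if ω < 0 then -ω / ε else 0)
    (hust : ustar = ud + lam • H⁻¹.mulVec a)
    (hδst : δstar = lam * s / β) :
    c₀ + a ⬝ᵥ ustar + s * δstar = max ω 0 ∧
    0 ≤ c₀ + a ⬝ᵥ ustar + s * δstar ∧
    lam * (c₀ + a ⬝ᵥ ustar + s * δstar) = 0 := by
  have hε_pos : 0 < ε := hε ▸ hH.dotProduct_inv_mulVec_add_sq_div_pos hβ hns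
  have hvalue : c₀ + a ⬝ᵥ ustar + s * δstar = max ω 0 := by
    rw [hust, hδst, constraint_along_filter_direction, ← hε, ← hω, hlam]
    exact add_ite_neg_div_mul_eq_max hε_pos.ne'
  refine ⟨hvalue, hvalue ▸ le_max_right ω 0, ?_⟩
  rw [hvalue, hlam]
  exact ite_neg_div_mul_max_eq_zero ω ε

/-- Feasibility and complementary slackness of the closed-form safety filter:
the constraint value at `(u⋆, δ⋆)` equals `max(ω, 0) ≥ 0`, and
`λ⋆ · (constraint value) = 0`. -/
theorem stmt_11 (m : ℕ) (hm : 1 ≤ m)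
    (H : Matrix (Fin m) (Fin m) ℝ) (hH : H.PosDef)
    (β : ℝ) (hβ : 0 < β)
    (ud a : Fin m → ℝ) (s c₀ : ℝ)
    (hns : ¬(a = 0 ∧ s = 0))
    (ε ω lam : ℝ) (ustar : Fin m → ℝ) (δstar : ℝ)
    (hε : ε = a ⬝ᵥ H⁻¹.mulVec a + s ^ 2 / β)
    (hω : ω = c₀ + a ⬝ᵥ ud)
    (hlam : lam = if ω < 0 then -ω / ε else 0)
    (hust : ustar = ud + lam • H⁻¹.mulVec a)
    (hδst : δstar = lam * s / β) :
    c₀ + a ⬝ᵥ ustar + s * δstar = max ω 0 ∧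
    0 ≤ c₀ + a ⬝ᵥ ustar + s * δstar ∧
    lam * (c₀ + a ⬝ᵥ ustar + s * δstar) = 0 :=
  stmt_11_general m H hH β hβ ud a s c₀ hns ε ω lam ustar δstar hε hω hlam hust hδst
end
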